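/- Let r ≥ 2 and s ≥ 1. The set Σ := {ν_1−ν_2, …, ν_{s−1}−ν_s, ν_s−ε_1, ε_1−ε_2, …, ε_{r−1}−ε_r, ε_{r−1}+ε_r} is a base of the restricted root system Δ := {±ε_i±ε_j : 1 ≤ i < j ≤ r} ∪ {±ν_i±ν_j : 1 ≤ i < j ≤ s} ∪ {±2ν_j : 1 ≤ j ≤ s} ∪ {±ε_i±ν_j : 1 ≤ i ≤ r, 1 ≤ j ≤ s} of type D(r,s): Σ is linearly independent over ℝ and every element of Δ is either a non-negative or a non-positive integer combination of elements of Σ. (Δ is the restricted root system of the pair (osp(2r|4s), osp(r|2s)×osp(r|2s)).) -/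

import Mathlib

/-!
Listing the coordinates in the order `ν_1, …, ν_s, ε_1, …, ε_r` as `w_0, …, w_{n-1}`
(`n = r + s`) turns `Σ` into the standard simple system of type `D_n`,
`w_k - w_{k+1}` together with `w_{n-2} + w_{n-1}`, and `Δ` into the roots `±w_k ± w_l`
(`k < l`) together with `±2 w_k` for `k < s ≤ n - 2`. Telescoping along the chain exhibits
`w_k - w_l` (`k ≤ l`) and `w_k + w_l` (`k ≤ n - 2`) as sums of simple roots, which covers
all of `Δ`; and `Σ` spans, because `w_{n-1}` is half the difference of the last two simple
roots, so its `n` elements are linearly independent.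
-/

open Pointwise

/-- `NComb S` is the set of all finite linear combinations of elements of `S`
with non-negative integer coefficients, i.e. the additive submonoid generated by `S`. -/
def NComb {V : Type*} [AddCommMonoid V] (S : Set V) : Set V :=
  (AddSubmonoid.closure S : Set V)

/-- `B` is a base of `Δ`: `B ⊆ Δ`, `B` is linearly independent over `ℝ`, and
`Δ ⊆ ℕB ∪ (−ℕB)`. -/
def IsBase {V : Type*} [AddCommGroup V] [Module ℝ V] (Δ B : Set V) : Prop :=
  B ⊆ Δ ∧ LinearIndependent ℝ (fun x : B => (x : V)) ∧
    Δ ⊆ NComb B ∪ (-NComb B)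

/-- The `i`-th standard basis vector of `ℝⁿ` (indices are 0-based; junk value `0` out of range). -/
def bv (n i : ℕ) : Fin n → ℝ :=
  if h : i < n then Pi.single (⟨i, h⟩ : Fin n) 1 else 0

/-- The set `{1, -1}` of signs. -/
def pm : Set ℝ := {1, -1}
/-- The restricted root system `D(r,s) = {±ε_i±ε_j : i<j} ∪ {±ν_i±ν_j : i<j} ∪ {±2ν_j}
∪ {±ε_i±ν_j}` of the pair `(osp(2r|4s), osp(r|2s) × osp(r|2s))`, with `ε_i = bv (r+s) i`
for `0 ≤ i < r` (0-based) and `ν_j = bv (r+s) (r+j)` for `0 ≤ j < s`. -/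
def D18 (r s : ℕ) : Set (Fin (r + s) → ℝ) :=
  {x | ∃ a ∈ pm, ∃ b ∈ pm, ∃ i j : ℕ, i < j ∧ j < r ∧
      x = a • bv (r + s) i + b • bv (r + s) j} ∪
  {x | ∃ a ∈ pm, ∃ b ∈ pm, ∃ i j : ℕ, i < j ∧ j < s ∧
      x = a • bv (r + s) (r + i) + b • bv (r + s) (r + j)} ∪
  {x | ∃ a ∈ pm, ∃ j : ℕ, j < s ∧ x = (2 * a) • bv (r + s) (r + j)} ∪
  {x | ∃ a ∈ pm, ∃ b ∈ pm, ∃ i j : ℕ, i < r ∧ j < s ∧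
      x = a • bv (r + s) i + b • bv (r + s) (r + j)}

/-- The set `Σ = {ν_1−ν_2, …, ν_{s−1}−ν_s, ν_s−ε_1, ε_1−ε_2, …, ε_{r−1}−ε_r, ε_{r−1}+ε_r}`
(0-based indices). -/
def S18 (r s : ℕ) : Set (Fin (r + s) → ℝ) :=
  {x | ∃ j : ℕ, j + 1 < s ∧ x = bv (r + s) (r + j) - bv (r + s) (r + j + 1)} ∪
  {bv (r + s) (r + s - 1) - bv (r + s) 0} ∪
  {x | ∃ i : ℕ, i + 1 < r ∧ x = bv (r + s) i - bv (r + s) (i + 1)} ∪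
  {bv (r + s) (r - 2) + bv (r + s) (r - 1)}

section DSimpleRoots

variable {V : Type*} [AddCommGroup V] (w : ℕ → V) (n : ℕ)

def dSimpleRoot (k : ℕ) : V :=
  if k + 1 < n then w k - w (k + 1) else w (n - 2) + w (n - 1)

def dSimpleRoots : Set V :=
  Set.range fun k : Fin n => dSimpleRoot w n k

variable {w n}

lemma dSimpleRoot_of_lt {k : ℕ} (hk : k + 1 < n) : dSimpleRoot w n k = w k - w (k + 1) :=
  if_pos hk

lemma dSimpleRoot_last (hn : 1 ≤ n) : dSimpleRoot w n (n - 1) = w (n - 2) + w (n - 1) :=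
  if_neg (by omega)

lemma dSimpleRoot_mem_closure {k : ℕ} (hk : k < n) :
    dSimpleRoot w n k ∈ AddSubmonoid.closure (dSimpleRoots w n) :=
  AddSubmonoid.subset_closure ⟨⟨k, hk⟩, rfl⟩

lemma sub_mem_closure_dSimpleRoots {k l : ℕ} (hkl : k ≤ l) (hl : l < n) :
    w k - w l ∈ AddSubmonoid.closure (dSimpleRoots w n) := by
  induction l, hkl using Nat.le_induction with
  | base => rw [sub_self]; exact zero_mem _
  | succ l _ ih =>
    have hstep := dSimpleRoot_mem_closure (w := w) (show l < n by omega)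
    rw [dSimpleRoot_of_lt hl] at hstep
    rw [← sub_add_sub_cancel (w k) (w l)]
    exact add_mem (ih (by omega)) hstep

lemma add_mem_closure_dSimpleRoots {k l : ℕ} (hk : k + 2 ≤ n) (hl : l < n) :
    w k + w l ∈ AddSubmonoid.closure (dSimpleRoots w n) := by
  have hlast := dSimpleRoot_mem_closure (w := w) (show n - 1 < n by omega)
  rw [dSimpleRoot_last (by omega)] at hlast
  have hsum := AddSubmonoid.add_mem _
    (AddSubmonoid.add_mem _ (sub_mem_closure_dSimpleRoots (w := w) (show k ≤ n - 2 by omega)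
      (by omega)) (sub_mem_closure_dSimpleRoots (w := w) (show l ≤ n - 1 by omega) (by omega)))
    hlast
  convert hsum using 1
  abel

section Real

variable [Module ℝ V]

variable (w n) in
def signedPairs : Set V :=
  {x | ∃ a ∈ pm, ∃ b ∈ pm, ∃ k l : ℕ, k < l ∧ l < n ∧ x = a • w k + b • w l}

lemma dSimpleRoot_mem_signedPairs (hn : 2 ≤ n) {k : ℕ} (hk : k < n) :
    dSimpleRoot w n k ∈ signedPairs w n := by
  unfold dSimpleRoot
  split_ifs with h
  · exact ⟨1, .inl rfl, -1, .inr rfl, k, k + 1, by omega, h, by module⟩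
  · exact ⟨1, .inl rfl, 1, .inl rfl, n - 2, n - 1, by omega, by omega, by module⟩

lemma signedPairs_subset : signedPairs w n ⊆
    NComb (dSimpleRoots w n) ∪ -NComb (dSimpleRoots w n) := by
  rintro x ⟨a, ha, b, hb, k, l, hkl, hl, rfl⟩
  have hadd := add_mem_closure_dSimpleRoots (w := w) (show k + 2 ≤ n by omega) hl
  have hsub := sub_mem_closure_dSimpleRoots (w := w) hkl.le hl
  rcases ha with rfl | rfl <;> rcases hb with rfl | rfl
  · exact .inl (by simpa [NComb] using hadd)
  · exact .inl (by simpa [NComb, ← sub_eq_add_neg] using hsub)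
  · exact .inr (by simpa [NComb, neg_add_eq_sub] using hsub)
  · exact .inr (by simpa [NComb, add_comm] using hadd)

lemma two_mul_smul_mem {a : ℝ} (ha : a ∈ pm) {k : ℕ} (hk : k + 2 ≤ n) :
    (2 * a) • w k ∈ NComb (dSimpleRoots w n) ∪ -NComb (dSimpleRoots w n) := by
  have hdouble := add_mem_closure_dSimpleRoots (w := w) hk (show k < n by omega)
  rcases ha with rfl | rfl
  · exact .inl (by simpa [NComb, two_smul] using hdouble)
  · exact .inr (by simpa [NComb, two_smul] using hdouble)

end Real

lemma mem_span_dSimpleRoots {K : Type*} [Field K] [Module K V] (h2 : (2 : K) ≠ 0)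
    (hn : 2 ≤ n) {k : ℕ} (hk : k < n) : w k ∈ Submodule.span K (dSimpleRoots w n) := by
  have hclosure : AddSubmonoid.closure (dSimpleRoots w n) ≤
      (Submodule.span K (dSimpleRoots w n)).toAddSubmonoid :=
    AddSubmonoid.closure_le.2 Submodule.subset_span
  have hsub : w (n - 2) - w (n - 1) ∈ Submodule.span K (dSimpleRoots w n) :=
    hclosure (sub_mem_closure_dSimpleRoots (by omega) (by omega))
  have hadd : w (n - 2) + w (n - 1) ∈ Submodule.span K (dSimpleRoots w n) :=
    hclosure (add_mem_closure_dSimpleRoots (by omega) (by omega))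
  have hlast : w (n - 1) ∈ Submodule.span K (dSimpleRoots w n) := by
    convert Submodule.smul_mem _ (2⁻¹ : K) (Submodule.sub_mem _ hadd hsub) using 1
    rw [add_sub_sub_cancel, ← two_smul K, smul_smul, inv_mul_cancel₀ h2, one_smul]
  have hk' : w k - w (n - 1) ∈ Submodule.span K (dSimpleRoots w n) :=
    hclosure (sub_mem_closure_dSimpleRoots (by omega) (by omega))
  rw [← sub_add_cancel (w k) (w (n - 1))]
  exact add_mem hk' hlast

lemma linearIndependent_dSimpleRoot {K : Type*} [Field K] [Module K V] (h2 : (2 : K) ≠ 0)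
    (hn : 2 ≤ n) (hw : ⊤ ≤ Submodule.span K (Set.range fun k : Fin n => w k))
    (hV : Module.finrank K V = n) :
    LinearIndependent K fun k : Fin n => dSimpleRoot w n k := by
  refine linearIndependent_of_top_le_span_of_card_eq_finrank (hw.trans ?_) (by simp [hV])
  exact Submodule.span_le.2 (Set.range_subset_iff.2 fun k => mem_span_dSimpleRoots h2 hn k.2)

end DSimpleRoots

def nuEpsVec (r s m : ℕ) : Fin (r + s) → ℝ :=
  if m < s then bv (r + s) (r + m) else bv (r + s) (m - s)

section NuEps

variable {r s : ℕ}

lemma nuEpsVec_of_lt {m : ℕ} (hm : m < s) : nuEpsVec r s m = bv (r + s) (r + m) :=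
  if_pos hm

lemma nuEpsVec_of_le {m : ℕ} (hm : s ≤ m) : nuEpsVec r s m = bv (r + s) (m - s) :=
  if_neg (by omega)

lemma nuEpsVec_add (i : ℕ) : nuEpsVec r s (s + i) = bv (r + s) i := by
  rw [nuEpsVec_of_le (by omega), Nat.add_sub_cancel_left]

lemma top_le_span_nuEpsVec :
    ⊤ ≤ Submodule.span ℝ (Set.range fun k : Fin (r + s) => nuEpsVec r s k) := by
  rw [← (Pi.basisFun ℝ (Fin (r + s))).span_eq]
  refine Submodule.span_mono (Set.range_subset_iff.2 fun i => ?_)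
  have hbv : Pi.basisFun ℝ (Fin (r + s)) i = bv (r + s) i := by
    simp [bv, Pi.basisFun_apply]
  rw [hbv]
  rcases lt_or_ge i.1 r with hi | hi
  · exact ⟨⟨s + i, by omega⟩, nuEpsVec_add _⟩
  · refine ⟨⟨i - r, by omega⟩, ?_⟩
    dsimp only
    rw [nuEpsVec_of_lt (by omega), Nat.add_sub_cancel' hi]

lemma D18_eq : D18 r s = signedPairs (nuEpsVec r s) (r + s) ∪
    {x | ∃ a ∈ pm, ∃ k : ℕ, k < s ∧ x = (2 * a) • nuEpsVec r s k} := by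
  ext x
  constructor
  · rintro (((⟨a, ha, b, hb, i, j, hij, hj, rfl⟩ | ⟨a, ha, b, hb, i, j, hij, hj, rfl⟩) |
      ⟨a, ha, j, hj, rfl⟩) | ⟨a, ha, b, hb, i, j, hi, hj, rfl⟩)
    · exact .inl ⟨a, ha, b, hb, s + i, s + j, by omega, by omega, by
        rw [nuEpsVec_add, nuEpsVec_add]⟩
    · exact .inl ⟨a, ha, b, hb, i, j, hij, by omega, by
        rw [nuEpsVec_of_lt (by omega), nuEpsVec_of_lt hj]⟩
    · exact .inr ⟨a, ha, j, hj, by rw [nuEpsVec_of_lt hj]⟩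
    · exact .inl ⟨b, hb, a, ha, j, s + i, by omega, by omega, by
        rw [nuEpsVec_add, nuEpsVec_of_lt hj]; exact add_comm _ _⟩
  · rintro (⟨a, ha, b, hb, k, l, hkl, hl, rfl⟩ | ⟨a, ha, k, hk, rfl⟩)
    · rcases lt_or_ge l s with hls | hls
      · refine .inl (.inl (.inr ⟨a, ha, b, hb, k, l, hkl, hls, ?_⟩))
        rw [nuEpsVec_of_lt (by omega), nuEpsVec_of_lt hls]
      rcases lt_or_ge k s with hks | hks
      · refine .inr ⟨b, hb, a, ha, l - s, k, by omega, hks, ?_⟩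
        rw [nuEpsVec_of_lt hks, nuEpsVec_of_le hls]
        exact add_comm _ _
      · refine .inl (.inl (.inl ⟨a, ha, b, hb, k - s, l - s, by omega, by omega, ?_⟩))
        rw [nuEpsVec_of_le hks, nuEpsVec_of_le hls]
    · exact .inl (.inr ⟨a, ha, k, hk, by rw [nuEpsVec_of_lt hk]⟩)

lemma dSimpleRoot_nuEpsVec_of_lt {j : ℕ} (hj : j + 1 < s) :
    dSimpleRoot (nuEpsVec r s) (r + s) j = bv (r + s) (r + j) - bv (r + s) (r + j + 1) := by
  rw [dSimpleRoot_of_lt (by omega), nuEpsVec_of_lt (by omega), nuEpsVec_of_lt hj, add_assoc]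

lemma dSimpleRoot_nuEpsVec_sub_one (hr : 1 ≤ r) (hs : 1 ≤ s) :
    dSimpleRoot (nuEpsVec r s) (r + s) (s - 1) = bv (r + s) (r + s - 1) - bv (r + s) 0 := by
  rw [dSimpleRoot_of_lt (show s - 1 + 1 < r + s by omega), nuEpsVec_of_lt (by omega),
    Nat.sub_add_cancel hs, nuEpsVec_of_le le_rfl, Nat.sub_self, ← Nat.add_sub_assoc hs]

lemma dSimpleRoot_nuEpsVec_add {i : ℕ} (hi : i + 1 < r) :
    dSimpleRoot (nuEpsVec r s) (r + s) (s + i) = bv (r + s) i - bv (r + s) (i + 1) := by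
  rw [dSimpleRoot_of_lt (by omega), add_assoc, nuEpsVec_add, nuEpsVec_add]

lemma dSimpleRoot_nuEpsVec_last (hr : 2 ≤ r) :
    dSimpleRoot (nuEpsVec r s) (r + s) (r + s - 1) =
      bv (r + s) (r - 2) + bv (r + s) (r - 1) := by
  rw [dSimpleRoot_last (by omega), show r + s - 2 = s + (r - 2) by omega,
    show r + s - 1 = s + (r - 1) by omega, nuEpsVec_add, nuEpsVec_add]

lemma S18_eq_dSimpleRoots (hr : 2 ≤ r) (hs : 1 ≤ s) :
    S18 r s = dSimpleRoots (nuEpsVec r s) (r + s) := by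
  ext x
  constructor
  · rintro (((⟨j, hj, rfl⟩ | rfl) | ⟨i, hi, rfl⟩) | rfl)
    · exact ⟨⟨j, by omega⟩, dSimpleRoot_nuEpsVec_of_lt hj⟩
    · exact ⟨⟨s - 1, by omega⟩, dSimpleRoot_nuEpsVec_sub_one (by omega) hs⟩
    · exact ⟨⟨s + i, by omega⟩, dSimpleRoot_nuEpsVec_add hi⟩
    · exact ⟨⟨r + s - 1, by omega⟩, dSimpleRoot_nuEpsVec_last hr⟩
  · rintro ⟨⟨k, hk⟩, rfl⟩
    dsimp only
    rcases lt_trichotomy (k + 1) s with hks | hks | hks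
    · exact .inl (.inl (.inl ⟨k, hks, dSimpleRoot_nuEpsVec_of_lt hks⟩))
    · obtain rfl : k = s - 1 := by omega
      exact .inl (.inl (.inr (dSimpleRoot_nuEpsVec_sub_one (by omega) hs)))
    obtain ⟨i, rfl⟩ : ∃ i, k = s + i := ⟨k - s, by omega⟩
    rcases lt_or_ge (i + 1) r with hi | hi
    · exact .inl (.inr ⟨i, hi, dSimpleRoot_nuEpsVec_add hi⟩)
    · rw [show s + i = r + s - 1 by omega]
      exact .inr (dSimpleRoot_nuEpsVec_last hr)

end NuEps

/-- `Σ` is a base of the restricted root system of type `D(r,s)`. -/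
theorem statement18 (r s : ℕ) (hr : 2 ≤ r) (hs : 1 ≤ s) :
    IsBase (D18 r s) (S18 r s) := by
  rw [D18_eq, S18_eq_dSimpleRoots hr hs]
  refine ⟨?_, (linearIndependent_dSimpleRoot two_ne_zero (by omega) top_le_span_nuEpsVec
    (by simp)).linearIndepOn_id, ?_⟩
  · rintro _ ⟨k, rfl⟩
    exact .inl (dSimpleRoot_mem_signedPairs (by omega) k.2)
  · rintro x (hx | ⟨a, ha, k, hk, rfl⟩)
    · exact signedPairs_subset hx
    · exact two_mul_smul_mem ha (by omega)
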